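/- Let M be a right proper model category whose class of weak equivalences is closed under finite products. Then for all objects X and Y, the function φ : π₀H(X,Y) → [X,Y] sending the class of a cocycle (f,g) to the composite g∘f⁻¹ in the homotopy category is a bijection. -/

import Mathlib

/-!
Postcomposition makes `π₀H(X, -)` a functor on `M`, and this functor inverts weak equivalences:
for `w : A ⟶ B`, a cocycle `X ← Z → B` is sent back by factoring `(f, g) : Z ⟶ X ⨯ B` as a trivial
cofibration followed by a fibration `Z' ⟶ X ⨯ B` and pulling this fibration back along the weak
equivalence `𝟙 X ⨯ w`; right properness makes the new first leg a weak equivalence, and lifting in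
the factorizations makes the construction respect morphisms of cocycles. Hence `π₀H(X, -)` extends
to `Ho(M)`, `φ` is natural there, and `β ↦ β_* [𝟙 X, 𝟙 X]` is inverse to `φ`, because `φ` sends the
identity cocycle to `𝟙` and `[f, g] = (Q g)_* (Q f)⁻¹_* [𝟙 X, 𝟙 X]`.
-/

open CategoryTheory CategoryTheory.Limits

universe v u

/-- A (closed) model structure on a category `M` with all finite limits and colimits. -/
structure ModelStr (M : Type u) [Category.{v} M] : Type (max u v) where
  weq : MorphismProperty M
  fib : MorphismProperty M
  cof : MorphismProperty M
  weq_id : ∀ X : M, weq (𝟙 X)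
  /-- CM2, two out of three -/
  weq_comp : ∀ {X Y Z : M} (f : X ⟶ Y) (g : Y ⟶ Z), weq f → weq g → weq (f ≫ g)
  weq_cancel_left : ∀ {X Y Z : M} (f : X ⟶ Y) (g : Y ⟶ Z), weq f → weq (f ≫ g) → weq g
  weq_cancel_right : ∀ {X Y Z : M} (f : X ⟶ Y) (g : Y ⟶ Z), weq g → weq (f ≫ g) → weq f
  /-- CM3: the three classes are closed under retracts. -/
  retracts : ∀ {X Y X' Y' : M} (f : X ⟶ Y) (g : X' ⟶ Y') (i : X ⟶ X') (r : X' ⟶ X)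
    (j : Y ⟶ Y') (s : Y' ⟶ Y), i ≫ r = 𝟙 X → j ≫ s = 𝟙 Y → i ≫ g = f ≫ j → g ≫ s = r ≫ f →
    (weq g → weq f) ∧ (fib g → fib f) ∧ (cof g → cof f)
  /-- CM4: lifting -/
  lifting : ∀ {A B X Y : M} (i : A ⟶ B) (p : X ⟶ Y) (u : A ⟶ X) (v : B ⟶ Y),
    cof i → fib p → (weq i ∨ weq p) → u ≫ p = i ≫ v →
    ∃ l : B ⟶ X, i ≫ l = u ∧ l ≫ p = v
  /-- CM5: factorizations -/
  fact_cof_triv_fib : ∀ {X Y : M} (f : X ⟶ Y),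
    ∃ (Z : M) (i : X ⟶ Z) (q : Z ⟶ Y), cof i ∧ fib q ∧ weq q ∧ i ≫ q = f
  fact_triv_cof_fib : ∀ {X Y : M} (f : X ⟶ Y),
    ∃ (Z : M) (j : X ⟶ Z) (p : Z ⟶ Y), cof j ∧ weq j ∧ fib p ∧ j ≫ p = f

/-- Right properness: weak equivalences are stable under pullback along fibrations. -/
def ModelStr.RightProper {M : Type u} [Category.{v} M] (S : ModelStr M) : Prop :=
  ∀ {P A B C : M} (fst : P ⟶ A) (snd : P ⟶ B) (f : A ⟶ C) (g : B ⟶ C),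
    IsPullback fst snd f g → S.weq f → S.fib g → S.weq snd

/-- The weak equivalences are closed under finite products: `f × 1` and `1 × f` are
weak equivalences whenever `f` is. -/
def ModelStr.WeqClosedUnderProducts {M : Type u} [Category.{v} M] [HasBinaryProducts M]
    (S : ModelStr M) : Prop :=
  ∀ {A B : M} (f : A ⟶ B) (Z : M), S.weq f →
    S.weq (Limits.prod.map f (𝟙 Z)) ∧ S.weq (Limits.prod.map (𝟙 Z) f)

/-- A cocycle from `X` to `Y`: a pair of maps `X ⟵ Z ⟶ Y` whose first leg is a weak
equivalence. -/
structure Cocycle {M : Type u} [Category.{v} M] (W : MorphismProperty M) (X Y : M) :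
    Type (max u v) where
  Z : M
  f : Z ⟶ X
  g : Z ⟶ Y
  hf : W f

/-- A morphism of cocycles `(f,g) → (f',g')` is a map of the middle objects commuting with
both legs.  Path components of the cocycle category are the quotient by the equivalence
relation generated by this relation. -/
def cocycleRel {M : Type u} [Category.{v} M] (W : MorphismProperty M) (X Y : M)
    (c c' : Cocycle W X Y) : Prop :=
  ∃ α : c.Z ⟶ c'.Z, α ≫ c'.f = c.f ∧ α ≫ c'.g = c.g

/-- `π₀H(X,Y)`, the path components of the cocycle category. -/
def pi0H {M : Type u} [Category.{v} M] (W : MorphismProperty M) (X Y : M) :=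
  Quot (cocycleRel W X Y)

namespace Cocycle

variable {M : Type u} [Category.{v} M] {W : MorphismProperty M} {X A B C : M}

def mapRight (c : Cocycle W X A) (h : A ⟶ B) : Cocycle W X B :=
  ⟨c.Z, c.f, c.g ≫ h, c.hf⟩

@[simp]
lemma mapRight_id (c : Cocycle W X A) : c.mapRight (𝟙 A) = c := by
  cases c
  simp [mapRight]

lemma mapRight_comp (c : Cocycle W X A) (h : A ⟶ B) (h' : B ⟶ C) :
    c.mapRight (h ≫ h') = (c.mapRight h).mapRight h' := by
  simp [mapRight]

def ofWeq {Z : M} (f : Z ⟶ X) (hf : W f) : Cocycle W X Z :=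
  ⟨Z, f, 𝟙 Z, hf⟩

lemma ofWeq_mapRight (c : Cocycle W X A) : (ofWeq c.f c.hf).mapRight c.g = c := by
  cases c
  simp [ofWeq, mapRight]

noncomputable def toHom (c : Cocycle W X A) : W.Q.obj X ⟶ W.Q.obj A :=
  have := W.Q_inverts c.f c.hf
  inv (W.Q.map c.f) ≫ W.Q.map c.g

@[simp]
lemma toHom_ofWeq_id (hX : W (𝟙 X)) : (ofWeq (𝟙 X) hX).toHom = 𝟙 (W.Q.obj X) := by
  have : IsIso (W.Q.map (ofWeq (𝟙 X) hX).f) := W.Q_inverts _ hX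
  exact IsIso.inv_hom_id _

lemma toHom_mapRight (c : Cocycle W X A) (h : A ⟶ B) :
    (c.mapRight h).toHom = c.toHom ≫ W.Q.map h := by
  change _ ≫ W.Q.map (c.g ≫ h) = (_ ≫ W.Q.map c.g) ≫ W.Q.map h
  rw [Functor.map_comp, Category.assoc]
  rfl

end Cocycle

namespace cocycleRel

variable {M : Type u} [Category.{v} M] {W : MorphismProperty M} {X A B : M}
  {c c' : Cocycle W X A}

lemma mapRight (h : A ⟶ B) (r : cocycleRel W X A c c') :
    cocycleRel W X B (c.mapRight h) (c'.mapRight h) := by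
  obtain ⟨α, hf, hg⟩ := r
  exact ⟨α, hf, show α ≫ c'.g ≫ h = c.g ≫ h by rw [← Category.assoc, hg]⟩

lemma toHom_eq (r : cocycleRel W X A c c') : c.toHom = c'.toHom := by
  obtain ⟨α, hf, hg⟩ := r
  have := W.Q_inverts c.f c.hf
  have := W.Q_inverts c'.f c'.hf
  simp only [Cocycle.toHom, IsIso.inv_comp_eq, ← hf, ← hg, Functor.map_comp, Category.assoc,
    IsIso.hom_inv_id_assoc]

end cocycleRel

namespace pi0H

variable {M : Type u} [Category.{v} M] {W : MorphismProperty M} {X A B : M}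

def mk (c : Cocycle W X A) : pi0H W X A :=
  Quot.mk _ c

def map (h : A ⟶ B) : pi0H W X A → pi0H W X B :=
  Quot.map (Cocycle.mapRight · h) fun _ _ => cocycleRel.mapRight h

noncomputable def toHom : pi0H W X A → (W.Q.obj X ⟶ W.Q.obj A) :=
  Quot.lift Cocycle.toHom fun _ _ => cocycleRel.toHom_eq

@[simp]
lemma toHom_mk (c : Cocycle W X A) : toHom (mk c) = c.toHom :=
  rfl

end pi0H

variable {M : Type u} [Category.{v} M]

def pi0HFunctor (W : MorphismProperty M) (X : M) : M ⥤ Type (max u v) where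
  obj := pi0H W X
  map h := TypeCat.ofHom (pi0H.map h)
  map_id A := by
    ext ⟨c⟩
    exact congrArg (Quot.mk _) c.mapRight_id
  map_comp h h' := by
    ext ⟨c⟩
    exact congrArg (Quot.mk _) (c.mapRight_comp h h')

section Corepresentability

variable {W : MorphismProperty M} {X : M} (hG : W.IsInvertedBy (pi0HFunctor W X))

noncomputable def pi0HLift : W.Localization ⥤ Type (max u v) :=
  Localization.Construction.lift (pi0HFunctor W X) hG

noncomputable def pi0H.mapLocalization {A B : M} (β : W.Q.obj A ⟶ W.Q.obj B) :
    pi0H W X A → pi0H W X B :=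
  (pi0HLift hG).map β

lemma pi0H.mapLocalization_comp {A B C : M} (β : W.Q.obj A ⟶ W.Q.obj B)
    (γ : W.Q.obj B ⟶ W.Q.obj C) (x : pi0H W X A) :
    x.mapLocalization hG (β ≫ γ) = (x.mapLocalization hG β).mapLocalization hG γ :=
  ConcreteCategory.congr_hom ((pi0HLift hG).map_comp β γ) x

lemma pi0H.mapLocalization_Q {A B : M} (h : A ⟶ B) (x : pi0H W X A) :
    x.mapLocalization hG (W.Q.map h) = x.map h :=
  rfl

noncomputable def pi0HToHom :
    W.Q ⋙ pi0HLift hG ⟶ W.Q ⋙ coyoneda.obj (Opposite.op (W.Q.obj X)) where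
  app A := TypeCat.ofHom pi0H.toHom
  naturality A B h := by
    ext ⟨c⟩
    exact Cocycle.toHom_mapRight c h

-- `pi0H.toHom` is natural along `W.Q`, hence along every morphism of the localization.
lemma pi0H.toHom_mapLocalization {A B : M} (β : W.Q.obj A ⟶ W.Q.obj B) (x : pi0H W X A) :
    (x.mapLocalization hG β).toHom = x.toHom ≫ β := by
  have := ConcreteCategory.congr_hom
    ((Localization.Construction.natTransExtension (pi0HToHom hG)).naturality β) x
  simp only [Localization.Construction.natTransExtension_app,
    Localization.Construction.NatTransExtension.app_eq] at this
  exact this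

lemma pi0H.mapLocalization_toHom (hX : W (𝟙 X)) {A : M} (c : Cocycle W X A) :
    (pi0H.mk (Cocycle.ofWeq (𝟙 X) hX)).mapLocalization hG c.toHom = pi0H.mk c := by
  have : IsIso (W.Q.map c.f) := W.Q_inverts c.f c.hf
  have hf : (pi0H.mk (Cocycle.ofWeq c.f c.hf)).mapLocalization hG (W.Q.map c.f) =
      pi0H.mk (Cocycle.ofWeq (𝟙 X) hX) :=
    Quot.sound ⟨c.f, Category.comp_id c.f, (Category.comp_id _).trans (Category.id_comp _).symm⟩
  rw [← hf, ← pi0H.mapLocalization_comp, Cocycle.toHom, IsIso.hom_inv_id_assoc,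
    pi0H.mapLocalization_Q]
  exact congrArg pi0H.mk c.ofWeq_mapRight

end Corepresentability

theorem pi0H.toHom_bijective {W : MorphismProperty M} {X : M} (hX : W (𝟙 X))
    (hG : W.IsInvertedBy (pi0HFunctor W X)) (Y : M) :
    Function.Bijective (pi0H.toHom : pi0H W X Y → (W.Q.obj X ⟶ W.Q.obj Y)) := by
  refine Function.bijective_iff_has_inverse.2
    ⟨fun β => (pi0H.mk (Cocycle.ofWeq (𝟙 X) hX)).mapLocalization hG β, ?_, fun β => ?_⟩
  · rintro ⟨c⟩
    exact pi0H.mapLocalization_toHom hG hX c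
  · dsimp only
    rw [pi0H.toHom_mapLocalization, pi0H.toHom_mk, Cocycle.toHom_ofWeq_id, Category.id_comp]

section PullbackAlongProdMap

variable {M : Type u} [Category.{v} M] [HasBinaryProducts M] [HasPullbacks M]
  {X A B P : M} (w : A ⟶ B) (q : P ⟶ X ⨯ B)

lemma pullback_fst_comp_prod_fst :
    pullback.fst (prod.map (𝟙 X) w) q ≫ prod.fst = pullback.snd _ _ ≫ q ≫ prod.fst := by
  rw [← Category.assoc, ← pullback.condition, Category.assoc, prod.map_fst, Category.comp_id]

lemma pullback_fst_comp_prod_snd_comp :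
    pullback.fst (prod.map (𝟙 X) w) q ≫ prod.snd ≫ w = pullback.snd _ _ ≫ q ≫ prod.snd := by
  rw [← prod.map_snd (𝟙 X) w, ← Category.assoc, pullback.condition, Category.assoc]

end PullbackAlongProdMap

namespace ModelStr

variable {M : Type u} [Category.{v} M] (S : ModelStr M)

section Factorization

variable {X Y : M} (f : X ⟶ Y)

noncomputable def factObj : M :=
  (S.fact_triv_cof_fib f).choose

noncomputable def factTrivCof : X ⟶ S.factObj f :=
  (S.fact_triv_cof_fib f).choose_spec.choose

noncomputable def factFib : S.factObj f ⟶ Y :=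
  (S.fact_triv_cof_fib f).choose_spec.choose_spec.choose

lemma cof_factTrivCof : S.cof (S.factTrivCof f) :=
  (S.fact_triv_cof_fib f).choose_spec.choose_spec.choose_spec.1

lemma weq_factTrivCof : S.weq (S.factTrivCof f) :=
  (S.fact_triv_cof_fib f).choose_spec.choose_spec.choose_spec.2.1

lemma fib_factFib : S.fib (S.factFib f) :=
  (S.fact_triv_cof_fib f).choose_spec.choose_spec.choose_spec.2.2.1

@[simp]
lemma factTrivCof_comp_factFib : S.factTrivCof f ≫ S.factFib f = f :=
  (S.fact_triv_cof_fib f).choose_spec.choose_spec.choose_spec.2.2.2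

end Factorization

variable [HasBinaryProducts M] {X A B : M}

noncomputable def fibrantCocycle (c : Cocycle S.weq X B) : Cocycle S.weq X B where
  Z := S.factObj (prod.lift c.f c.g)
  f := S.factFib (prod.lift c.f c.g) ≫ prod.fst
  g := S.factFib (prod.lift c.f c.g) ≫ prod.snd
  hf := by
    refine S.weq_cancel_left _ _ (S.weq_factTrivCof _) ?_
    rw [← Category.assoc, factTrivCof_comp_factFib, prod.lift_fst]
    exact c.hf

lemma cocycleRel_fibrantCocycle (c : Cocycle S.weq X B) :
    cocycleRel S.weq X B c (S.fibrantCocycle c) :=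
  ⟨S.factTrivCof _,
    show _ ≫ S.factFib _ ≫ prod.fst = _ by
      rw [← Category.assoc, factTrivCof_comp_factFib, prod.lift_fst],
    show _ ≫ S.factFib _ ≫ prod.snd = _ by
      rw [← Category.assoc, factTrivCof_comp_factFib, prod.lift_snd]⟩

variable [HasPullbacks M] {S} (hproper : S.RightProper) (hprod : S.WeqClosedUnderProducts)
  (w : A ⟶ B) (hw : S.weq w)

include hproper hprod hw in
lemma weq_pullback_snd_prodMap {P : M} {q : P ⟶ X ⨯ B} (hq : S.fib q) :
    S.weq (pullback.snd (prod.map (𝟙 X) w) q) :=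
  hproper _ _ _ _ (IsPullback.of_hasPullback _ _) (hprod w X hw).2 hq

noncomputable def pullbackCocycle (c : Cocycle S.weq X B) : Cocycle S.weq X A where
  Z := pullback (prod.map (𝟙 X) w) (S.factFib (prod.lift c.f c.g))
  f := pullback.fst _ _ ≫ prod.fst
  g := pullback.fst _ _ ≫ prod.snd
  hf := by
    rw [pullback_fst_comp_prod_fst]
    exact S.weq_comp _ _ (weq_pullback_snd_prodMap hproper hprod w hw (S.fib_factFib _))
      (S.fibrantCocycle c).hf

lemma cocycleRel_pullbackCocycle {c c' : Cocycle S.weq X B} (r : cocycleRel S.weq X B c c') :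
    cocycleRel S.weq X A (pullbackCocycle hproper hprod w hw c)
      (pullbackCocycle hproper hprod w hw c') := by
  obtain ⟨α, hf, hg⟩ := r
  obtain ⟨β, -, hβq⟩ := S.lifting (S.factTrivCof _) (S.factFib (prod.lift c'.f c'.g))
    (α ≫ S.factTrivCof _) (S.factFib (prod.lift c.f c.g)) (S.cof_factTrivCof _)
    (S.fib_factFib _) (Or.inl (S.weq_factTrivCof _)) (by simp [hf, hg])
  refine ⟨pullback.lift (pullback.fst _ _) (pullback.snd _ _ ≫ β) ?_, ?_, ?_⟩
  · exact pullback.condition.trans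
      ((congrArg (pullback.snd _ _ ≫ ·) hβq).symm.trans (Category.assoc _ _ _).symm)
  · exact pullback.lift_fst_assoc ..
  · exact pullback.lift_fst_assoc ..

lemma cocycleRel_pullbackCocycle_mapRight (c : Cocycle S.weq X A) :
    cocycleRel S.weq X A c (pullbackCocycle hproper hprod w hw (c.mapRight w)) := by
  refine ⟨pullback.lift (prod.lift c.f c.g) (S.factTrivCof _) ?_, ?_, ?_⟩
  · refine (prod.lift_map ..).trans (Eq.trans ?_ (S.factTrivCof_comp_factFib _).symm)
    rw [Category.comp_id]
    rfl
  · exact (pullback.lift_fst_assoc ..).trans (prod.lift_fst ..)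
  · exact (pullback.lift_fst_assoc ..).trans (prod.lift_snd ..)

lemma cocycleRel_mapRight_pullbackCocycle (c : Cocycle S.weq X B) :
    cocycleRel S.weq X B ((pullbackCocycle hproper hprod w hw c).mapRight w)
      (S.fibrantCocycle c) :=
  ⟨pullback.snd _ _, (pullback_fst_comp_prod_fst _ _).symm,
    (pullback_fst_comp_prod_snd_comp _ _).symm.trans (Category.assoc _ _ _).symm⟩

include hproper hprod in
theorem isInvertedBy_pi0HFunctor (X : M) : S.weq.IsInvertedBy (pi0HFunctor S.weq X) := by
  intro A B w hw
  let pullbackClass : pi0H S.weq X B → pi0H S.weq X A :=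
    Quot.map (pullbackCocycle hproper hprod w hw) fun _ _ =>
      cocycleRel_pullbackCocycle hproper hprod w hw
  rw [isIso_iff_bijective]
  refine ⟨Function.LeftInverse.injective (g := pullbackClass) ?_, ?_⟩
  · rintro ⟨c⟩
    exact (Quot.sound (cocycleRel_pullbackCocycle_mapRight hproper hprod w hw c)).symm
  · rintro ⟨d⟩
    exact ⟨pullbackClass (Quot.mk _ d),
      (Quot.sound (cocycleRel_mapRight_pullbackCocycle hproper hprod w hw d)).trans
        (Quot.sound (S.cocycleRel_fibrantCocycle d)).symm⟩

end ModelStr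

theorem cocycle_pi0_bijection_general {M : Type u} [Category.{v} M]
    [HasFiniteLimits M]
    (S : ModelStr M) (hproper : S.RightProper) (hprod : S.WeqClosedUnderProducts)
    (X Y : M) :
    ∃ φ : pi0H S.weq X Y → (S.weq.Q.obj X ⟶ S.weq.Q.obj Y),
      (∀ c : Cocycle S.weq X Y,
        φ (Quot.mk _ c) =
          (haveI : IsIso (S.weq.Q.map c.f) := S.weq.Q_inverts c.f c.hf
           inv (S.weq.Q.map c.f)) ≫ S.weq.Q.map c.g) ∧
      Function.Bijective φ :=
  ⟨pi0H.toHom, fun _ => rfl,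
    pi0H.toHom_bijective (S.weq_id X) (ModelStr.isInvertedBy_pi0HFunctor hproper hprod X) Y⟩

theorem cocycle_pi0_bijection {M : Type u} [Category.{v} M]
    [HasFiniteLimits M] [HasFiniteColimits M]
    (S : ModelStr M) (hproper : S.RightProper) (hprod : S.WeqClosedUnderProducts)
    (X Y : M) :
    ∃ φ : pi0H S.weq X Y → (S.weq.Q.obj X ⟶ S.weq.Q.obj Y),
      (∀ c : Cocycle S.weq X Y,
        φ (Quot.mk _ c) =
          (haveI : IsIso (S.weq.Q.map c.f) := S.weq.Q_inverts c.f c.hf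
           inv (S.weq.Q.map c.f)) ≫ S.weq.Q.map c.g) ∧
      Function.Bijective φ :=
  cocycle_pi0_bijection_general S hproper hprod X Y
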